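/- arXiv:math/0011209 — 2 statements merged into one kernel-verified Lean document; each statement's English description precedes it below -/
import Mathlib

section
/- Let L be a complete lattice. For every subset A ⊆ L, the set 𝒞(A) is the smallest distributive ideal of L containing A; in particular 𝒞 is a closure operator on the powerset of L (monotone, satisfies A ⊆ 𝒞(A), and 𝒞(𝒞(A)) = 𝒞(A)), and a subset A ⊆ L is a distributive ideal if and only if 𝒞(A) = A. -/
/-- A subset `S` of a complete lattice is *distributive* if
`a ⊓ sSup S = ⨆ s ∈ S, a ⊓ s` for every `a`. -/
def IsDistrib {L : Type*} [CompleteLattice L] (S : Set L) : Prop :=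
  ∀ a : L, a ⊓ sSup S = ⨆ s ∈ S, a ⊓ s

/-- A *distributive ideal* is a lower set closed under suprema of its
distributive subsets. -/
def IsDistribIdeal {L : Type*} [CompleteLattice L] (I : Set L) : Prop :=
  IsLowerSet I ∧ ∀ S : Set L, S ⊆ I → IsDistrib S → sSup S ∈ I

/-- The lower set `↓A` generated by `A`. -/
def downSet {L : Type*} [CompleteLattice L] (A : Set L) : Set L :=
  {x | ∃ a ∈ A, x ≤ a}

/-- The closure `𝒞(A) = { sSup B | B ⊆ ↓A, B distributive }`. -/
def distClosure {L : Type*} [CompleteLattice L] (A : Set L) : Set L :=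
  {x | ∃ B : Set L, B ⊆ downSet A ∧ IsDistrib B ∧ x = sSup B}


section DistClosureAux
variable {L : Type*} [CompleteLattice L]

lemma isDistrib_singleton (b : L) : IsDistrib ({b} : Set L) := by
  intro a; simp [IsDistrib]

lemma subset_distClosure (A : Set L) : A ⊆ distClosure A := by
  intro a ha
  exact ⟨{a}, fun x hx => ⟨a, ha, le_of_eq hx⟩, isDistrib_singleton a, by simp⟩

lemma biSup_biUnion (A : Set L) (S : L → Set L) (f : L → L) :
    ⨆ t ∈ ⋃ x ∈ A, S x, f t = ⨆ x ∈ A, ⨆ t ∈ S x, f t := by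
  simp only [Set.mem_iUnion, iSup_exists]
  rw [iSup_comm]
  exact iSup_congr fun x => by rw [iSup_comm]

lemma distClosure_isLowerSet (A : Set L) : IsLowerSet (distClosure A) := by
  rintro x y hyx ⟨B, hB, hd, rfl⟩
  have hsup : sSup ((fun b => y ⊓ b) '' B) = y := by
    rw [sSup_image, ← hd y, inf_eq_left.mpr hyx]
  refine ⟨(fun b => y ⊓ b) '' B, ?_, ?_, hsup.symm⟩
  · rintro _ ⟨b, hb, rfl⟩
    obtain ⟨a, ha, hba⟩ := hB hb
    exact ⟨a, ha, inf_le_right.trans hba⟩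
  · intro c
    rw [hsup, iSup_image]
    calc c ⊓ y = (c ⊓ y) ⊓ sSup B :=
          (inf_eq_left.mpr (inf_le_right.trans hyx)).symm
      _ = ⨆ b ∈ B, (c ⊓ y) ⊓ b := hd (c ⊓ y)
      _ = ⨆ b ∈ B, c ⊓ (y ⊓ b) := by simp_rw [inf_assoc]

lemma distClosure_closed (A : Set L) (S : Set L) (hS : S ⊆ distClosure A)
    (hSd : IsDistrib S) : sSup S ∈ distClosure A := by
  have hS' : ∀ x ∈ S, ∃ B : Set L, B ⊆ downSet A ∧ IsDistrib B ∧ x = sSup B :=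
    fun x hx => hS hx
  choose! B hB1 hB2 hB3 using hS'
  have key : ∀ a : L, ⨆ t ∈ ⋃ x ∈ S, B x, a ⊓ t = ⨆ x ∈ S, a ⊓ x := by
    intro a
    rw [biSup_biUnion]
    exact iSup_congr fun x => iSup_congr fun hx => by
      rw [← hB2 x hx a, ← hB3 x hx]
  have hsup : sSup (⋃ x ∈ S, B x) = sSup S := by
    apply le_antisymm
    · refine sSup_le fun t ht => ?_
      simp only [Set.mem_iUnion] at ht
      obtain ⟨x, hx, htx⟩ := ht
      exact le_trans (le_sSup htx) ((hB3 x hx ▸ le_sSup hx))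
    · have := key (sSup S)
      rw [← (hSd (sSup S)), inf_idem] at this
      calc sSup S = ⨆ t ∈ ⋃ x ∈ S, B x, sSup S ⊓ t := this.symm
        _ ≤ sSup (⋃ x ∈ S, B x) :=
          iSup₂_le fun t ht => inf_le_right.trans (le_sSup ht)
  refine ⟨⋃ x ∈ S, B x, ?_, ?_, hsup.symm⟩
  · intro t ht
    simp only [Set.mem_iUnion] at ht
    obtain ⟨x, hx, htx⟩ := ht
    exact hB1 x hx htx
  · intro a
    rw [hsup, hSd a, key a]

lemma distClosure_min {A J : Set L} (hJ : IsDistribIdeal J) (hAJ : A ⊆ J) :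
    distClosure A ⊆ J := by
  rintro x ⟨B, hB, hd, rfl⟩
  refine hJ.2 B (fun b hb => ?_) hd
  obtain ⟨a, ha, hba⟩ := hB hb
  exact hJ.1 hba (hAJ ha)

lemma distClosure_mono {A B : Set L} (h : A ⊆ B) : distClosure A ⊆ distClosure B := by
  rintro x ⟨C, hC, hd, rfl⟩
  exact ⟨C, fun c hc => by obtain ⟨a, ha, hca⟩ := hC hc; exact ⟨a, h ha, hca⟩, hd, rfl⟩

end DistClosureAux

/-- `𝒞(A)` is the smallest distributive ideal containing `A`; `𝒞` is a closure
operator on the powerset of `L`, and `A` is a distributive ideal iff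
`𝒞(A) = A`. -/
theorem distClosure_is_closure {L : Type*} [CompleteLattice L] :
    (∀ A : Set L, IsDistribIdeal (distClosure A) ∧ A ⊆ distClosure A ∧
      ∀ J : Set L, IsDistribIdeal J → A ⊆ J → distClosure A ⊆ J) ∧
    (∀ A B : Set L, A ⊆ B → distClosure A ⊆ distClosure B) ∧
    (∀ A : Set L, distClosure (distClosure A) = distClosure A) ∧
    (∀ A : Set L, IsDistribIdeal A ↔ distClosure A = A) := by
  refine ⟨fun A => ⟨⟨distClosure_isLowerSet A, distClosure_closed A⟩,
      subset_distClosure A, fun J hJ hAJ => distClosure_min hJ hAJ⟩,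
    fun A B h => distClosure_mono h, fun A => ?_, fun A => ?_⟩
  · apply le_antisymm
    · exact distClosure_min ⟨distClosure_isLowerSet A, distClosure_closed A⟩
        (le_refl _)
    · exact subset_distClosure _
  · constructor
    · intro hA
      exact le_antisymm (distClosure_min hA (le_refl _)) (subset_distClosure A)
    · intro h
      rw [← h]
      exact ⟨distClosure_isLowerSet A, distClosure_closed A⟩
end

section
/- Let L₁ and L₂ be complete lattices and let h : DI(L₁) → DI(L₂) preserve arbitrary suprema of distributive ideals (h(𝒞₁(⋃_i A_i)) = 𝒞₂(⋃_i h(A_i)) for every family {A_i}) and satisfy: for all A, B ∈ DI(L₁), if sSup A = sSup B then sSup (h(A)) = sSup (h(B)). Then there exists a unique map ē : L₁ → L₂ preserving arbitrary suprema such that ē(sSup A) = sSup (h(A)) for every A ∈ DI(L₁). -/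

lemma isDistrib_singleton' {L : Type*} [CompleteLattice L] (a : L) :
    IsDistrib ({a} : Set L) := by
  intro b; simp

lemma isDistribIdeal_Iic' {L : Type*} [CompleteLattice L] (x : L) :
    IsDistribIdeal (Set.Iic x) := by
  refine ⟨fun a b hba ha => le_trans hba ha, fun S hS _ => sSup_le fun s hs => hS hs⟩

lemma sSup_distClosure' {L : Type*} [CompleteLattice L] (A : Set L) :
    sSup (distClosure A) = sSup A := by
  apply le_antisymm
  · apply sSup_le
    rintro x ⟨B, hB, -, rfl⟩
    apply sSup_le
    intro b hb
    obtain ⟨a, ha, hba⟩ := hB hb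
    exact le_trans hba (le_sSup ha)
  · apply sSup_le
    intro a ha
    refine le_sSup ⟨{a}, ?_, isDistrib_singleton' a, (sSup_singleton).symm⟩
    intro b hb
    exact ⟨a, ha, by simpa using le_of_eq hb⟩

lemma isDistribIdeal_distClosure' {L : Type*} [CompleteLattice L] (A : Set L) :
    IsDistribIdeal (distClosure A) := by
  constructor
  · rintro x y hyx ⟨B, hB, hd, rfl⟩
    have hy : y ⊓ sSup B = y := inf_eq_left.mpr hyx
    refine ⟨(fun b => y ⊓ b) '' B, ?_, ?_, ?_⟩
    · rintro _ ⟨b, hb, rfl⟩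
      obtain ⟨a, ha, hba⟩ := hB hb
      exact ⟨a, ha, le_trans inf_le_right hba⟩
    · intro a
      have h1 : sSup ((fun b => y ⊓ b) '' B) = y := by
        rw [sSup_image, ← hd y, hy]
      rw [h1]
      have h2 : a ⊓ y = (a ⊓ y) ⊓ sSup B :=
        (inf_eq_left.mpr (le_trans inf_le_right hyx)).symm
      rw [h2, hd (a ⊓ y)]
      rw [iSup_image]
      exact iSup_congr fun b => iSup_congr fun _ => by rw [inf_assoc]
    · rw [sSup_image, ← hd y, hy]
  · rintro S hS hdS
    choose B hB hBd hBs using fun s : S => hS s.2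
    have hSup : sSup (⋃ s : S, B s) = sSup S := by
      rw [sSup_iUnion, sSup_eq_iSup']
      exact iSup_congr fun s => (hBs s).symm
    refine ⟨⋃ s : S, B s, ?_, ?_, ?_⟩
    · exact Set.iUnion_subset fun s => hB s
    · intro a
      rw [hSup, hdS a, iSup_iUnion]
      rw [iSup_subtype']
      exact iSup_congr fun s => by rw [hBs s, hBd s a]
    · exact hSup.symm

/-- If `h : DI(L₁) → DI(L₂)` preserves arbitrary suprema of distributive ideals
and is compatible with `sSup`, then there is a unique suprema-preserving map
`ē : L₁ → L₂` with `ē (sSup A) = sSup (h A)` for every distributive ideal `A`. -/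
theorem exists_unique_propagation {L₁ : Type*} {L₂ : Type*}
    [CompleteLattice L₁] [CompleteLattice L₂]
    (h : Set L₁ → Set L₂)
    (hDI : ∀ A : Set L₁, IsDistribIdeal A → IsDistribIdeal (h A))
    (hsup : ∀ 𝒜 : Set (Set L₁), (∀ A ∈ 𝒜, IsDistribIdeal A) →
      h (distClosure (⋃₀ 𝒜)) = distClosure (⋃ A ∈ 𝒜, h A))
    (hcomp : ∀ A B : Set L₁, IsDistribIdeal A → IsDistribIdeal B →
      sSup A = sSup B → sSup (h A) = sSup (h B)) :
    ∃! e : L₁ → L₂,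
      (∀ S : Set L₁, e (sSup S) = ⨆ a ∈ S, e a) ∧
      (∀ A : Set L₁, IsDistribIdeal A → e (sSup A) = sSup (h A)) := by
    classical
  have hIic : ∀ x : L₁, IsDistribIdeal (Set.Iic x) := isDistribIdeal_Iic'
  refine ⟨fun x => sSup (h (Set.Iic x)), ⟨?_, ?_⟩, ?_⟩
  · intro S
    set 𝒜 : Set (Set L₁) := Set.Iic '' S with h𝒜
    have h𝒜DI : ∀ A ∈ 𝒜, IsDistribIdeal A := by
      rintro _ ⟨a, -, rfl⟩; exact hIic a
    have hU : sSup (⋃₀ 𝒜) = sSup S := by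
      apply le_antisymm
      · apply sSup_le
        rintro x ⟨_, ⟨a, ha, rfl⟩, hx⟩
        exact le_trans hx (le_sSup ha)
      · apply sSup_le_sSup
        intro a ha
        exact ⟨Set.Iic a, ⟨a, ha, rfl⟩, le_refl a⟩
    have step1 : sSup (h (Set.Iic (sSup S))) = sSup (h (distClosure (⋃₀ 𝒜))) :=
      hcomp _ _ (hIic _) (isDistribIdeal_distClosure' _)
        (by rw [csSup_Iic, sSup_distClosure', hU])
    have step2 : h (distClosure (⋃₀ 𝒜)) = distClosure (⋃ A ∈ 𝒜, h A) := hsup 𝒜 h𝒜DI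
    have step4 : sSup (⋃ A ∈ 𝒜, h A) = ⨆ a ∈ S, sSup (h (Set.Iic a)) := by
      apply le_antisymm
      · apply sSup_le
        rintro x hx
        simp only [Set.mem_iUnion] at hx
        obtain ⟨C, hC, hxC⟩ := hx
        obtain ⟨a, ha, rfl⟩ := hC
        exact le_trans (le_sSup hxC) (le_iSup₂ (f := fun a _ => sSup (h (Set.Iic a))) a ha)
      · apply iSup₂_le
        intro a ha
        apply sSup_le_sSup
        intro x hx
        exact Set.mem_iUnion₂.mpr ⟨Set.Iic a, ⟨a, ha, rfl⟩, hx⟩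
    show sSup (h (Set.Iic (sSup S))) = ⨆ a ∈ S, sSup (h (Set.Iic a))
    rw [step1, step2, sSup_distClosure', step4]
  · intro A hA
    exact hcomp _ _ (hIic _) hA (by rw [csSup_Iic])
  · rintro e' ⟨-, he2⟩
    funext x
    have := he2 (Set.Iic x) (hIic x)
    rw [csSup_Iic] at this
    exact this
end
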